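/- The four integrals of motion of geodesic motion in the Kerr spacetime Poisson-commute with each other: {F_α, F_β} = 0 on 𝒰 for all α, β ∈ {0,1,2,3}; in particular the nontrivial bracket {H, F₃} vanishes identically. -/

import Mathlib

/-!
The coordinates `t` and `φ` are cyclic, so `p_t` and `p_φ` commute with `H` and `F₃`, and the
only nontrivial bracket is `{H, F₃}`. Write `F₃ = C − 2a² cos²ϑ H`, where
`C = p_ϑ² + (p_φ / sin ϑ + a sin ϑ p_t)²` involves neither `r` nor `p_r`: the `(r, p_r)`-terms of
`{H, F₃}` then cancel in pairs. Differentiating `2ρ² H = N` (with `N` the bracket in the definition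
of `H`) in `ϑ`, the `(ϑ, p_ϑ)`-terms collapse to `(p_ϑ / ρ²) ∂_ϑ (C − N)`, and `C − N` does not
depend on `ϑ`: this is Carter's separation of variables.
-/

open Real

noncomputable section

/-- Phase space points `z = (t,r,ϑ,φ; p_t,p_r,p_ϑ,p_φ)`, with
`x^μ = z 0, z 1, z 2, z 3` and `p_μ = z 4, z 5, z 6, z 7`. -/
abbrev Phase : Type := Fin 8 → ℝ

/-- Partial derivative of `F` with respect to the `μ`-th coordinate. -/
def pderiv (μ : Fin 8) (F : Phase → ℝ) (z : Phase) : ℝ :=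
  fderiv ℝ F z (Pi.single μ 1)

/-- The canonical Poisson bracket
`{F,G} = Σ_μ (∂F/∂p_μ ∂G/∂x^μ − ∂F/∂x^μ ∂G/∂p_μ)`. -/
def PB (F G : Phase → ℝ) (z : Phase) : ℝ :=
  (pderiv 4 F z * pderiv 0 G z - pderiv 0 F z * pderiv 4 G z) +
  (pderiv 5 F z * pderiv 1 G z - pderiv 1 F z * pderiv 5 G z) +
  (pderiv 6 F z * pderiv 2 G z - pderiv 2 F z * pderiv 6 G z) +
  (pderiv 7 F z * pderiv 3 G z - pderiv 3 F z * pderiv 7 G z)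

/-- The free-particle Hamiltonian of the Kerr metric in horizon-penetrating
coordinates. -/
def KerrH (MH aH : ℝ) (z : Phase) : ℝ :=
  (1 / (2 * ((z 1) ^ 2 + aH ^ 2 * Real.cos (z 2) ^ 2))) *
    (-(((z 1) ^ 2 + aH ^ 2 * Real.cos (z 2) ^ 2) + 2 * MH * z 1) * (z 4) ^ 2
      + 4 * MH * z 1 * z 4 * z 5 + 2 * aH * z 5 * z 7
      + ((z 1) ^ 2 - 2 * MH * z 1 + aH ^ 2) * (z 5) ^ 2
      + (z 6) ^ 2 + (z 7) ^ 2 / Real.sin (z 2) ^ 2)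

/-- The four integrals of motion `F₀ = −H`, `F₁ = −p_t`, `F₂ = p_φ` and
`F₃` (the Carter constant). -/
def KerrF (MH aH : ℝ) : Fin 4 → Phase → ℝ :=
  ![fun z => -KerrH MH aH z,
    fun z => -(z 4),
    fun z => z 7,
    fun z => (z 6) ^ 2 + (z 7 / Real.sin (z 2) + aH * Real.sin (z 2) * z 4) ^ 2
      - 2 * aH ^ 2 * Real.cos (z 2) ^ 2 * KerrH MH aH z]

section PoissonBracket

variable {F G : Phase → ℝ} {z : Phase}

theorem PB_antisymm : PB F G z = -PB G F z := by
  unfold PB; ring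

theorem PB_self : PB F F z = 0 := by
  unfold PB; ring

theorem pderiv_neg (μ : Fin 8) : pderiv μ (fun z => -F z) z = -pderiv μ F z := by
  simp [pderiv]

theorem PB_neg_left : PB (fun z => -F z) G z = -PB F G z := by
  simp only [PB, pderiv_neg]; ring

theorem PB_neg_right : PB F (fun z => -G z) z = -PB F G z := by
  simp only [PB, pderiv_neg]; ring

theorem pderiv_coord (μ ν : Fin 8) :
    pderiv μ (fun z : Phase => z ν) z = if ν = μ then 1 else 0 := by
  simp [pderiv, (hasFDerivAt_apply (𝕜 := ℝ) ν z).fderiv, Pi.single_apply]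

theorem PB_time_momentum_left : PB (fun z => z 4) G z = pderiv 0 G z := by
  simp [PB, pderiv_coord]

theorem PB_time_momentum_right : PB G (fun z => z 4) z = -pderiv 0 G z := by
  rw [PB_antisymm, PB_time_momentum_left]

theorem PB_azimuthal_momentum_left : PB (fun z => z 7) G z = pderiv 3 G z := by
  simp [PB, pderiv_coord]

theorem PB_azimuthal_momentum_right : PB G (fun z => z 7) z = -pderiv 3 G z := by
  rw [PB_antisymm, PB_azimuthal_momentum_left]

end PoissonBracket

theorem fderiv_apply_eq_zero_of_forall_add_smul {𝕜 E F : Type*} [NontriviallyNormedField 𝕜]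
    [NormedAddCommGroup E] [NormedSpace 𝕜 E] [NormedAddCommGroup F] [NormedSpace 𝕜 F]
    {f : E → F} {x v : E} (h : ∀ t : 𝕜, f (x + t • v) = f x) : fderiv 𝕜 f x v = 0 := by
  by_cases hf : DifferentiableAt 𝕜 f x
  · rw [← hf.lineDeriv_eq_fderiv, lineDeriv, funext h, deriv_const]
  · simp [fderiv_zero_of_not_differentiableAt hf]

theorem HasFDerivAt.div {E : Type*} [NormedAddCommGroup E] [NormedSpace ℝ E] {f g : E → ℝ}
    {f' g' : E →L[ℝ] ℝ} {x : E} (hf : HasFDerivAt f f' x) (hg : HasFDerivAt g g' x)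
    (hx : g x ≠ 0) :
    HasFDerivAt (fun y => f y / g y) ((g x)⁻¹ • f' - (f x / g x ^ 2) • g') x := by
  simp only [div_eq_mul_inv]
  refine (hf.mul ((hasDerivAt_inv hx).comp_hasFDerivAt x hg)).congr_fderiv ?_
  ext v
  simp; ring

section Kerr

open ContinuousLinearMap

variable (MH aH : ℝ) {z : Phase}

theorem pderiv_KerrH_eq_zero {μ : Fin 8} (hμ : μ = 0 ∨ μ = 3) :
    pderiv μ (KerrH MH aH) z = 0 := by
  refine fderiv_apply_eq_zero_of_forall_add_smul fun t => ?_
  rcases hμ with rfl | rfl <;> simp [KerrH]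

theorem pderiv_KerrF_three_eq_zero {μ : Fin 8} (hμ : μ = 0 ∨ μ = 3) :
    pderiv μ (KerrF MH aH 3) z = 0 := by
  refine fderiv_apply_eq_zero_of_forall_add_smul fun t => ?_
  rcases hμ with rfl | rfl <;> simp [KerrF, KerrH]

theorem hasFDerivAt_KerrH (hs : sin (z 2) ≠ 0) (hρ : z 1 ^ 2 + aH ^ 2 * cos (z 2) ^ 2 ≠ 0) :
    ∃ D : Phase →L[ℝ] ℝ, HasFDerivAt (KerrH MH aH) D z ∧
      D (Pi.single 2 1) = (aH ^ 2 * cos (z 2) * sin (z 2) * (z 4 ^ 2 + 2 * KerrH MH aH z)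
        - cos (z 2) * z 7 ^ 2 / sin (z 2) ^ 3) / (z 1 ^ 2 + aH ^ 2 * cos (z 2) ^ 2) ∧
      D (Pi.single 6 1) = z 6 / (z 1 ^ 2 + aH ^ 2 * cos (z 2) ^ 2) := by
  have hx (i : Fin 8) : HasFDerivAt (fun z : Phase => z i) (proj i : Phase →L[ℝ] ℝ) z :=
    hasFDerivAt_apply i z
  have hρ2 := ((hx 1).pow 2).add (((hx 2).cos.pow 2).const_mul (aH ^ 2))
  have hN := (((((((hρ2.add ((hx 1).const_mul (2 * MH))).neg.mul ((hx 4).pow 2)).add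
    ((((hx 1).const_mul (4 * MH)).mul (hx 4)).mul (hx 5))).add
    (((hx 5).const_mul (2 * aH)).mul (hx 7))).add
    (((((hx 1).pow 2).sub ((hx 1).const_mul (2 * MH))).add_const (aH ^ 2)).mul ((hx 5).pow 2))).add
    ((hx 6).pow 2)).add (((hx 7).pow 2).div ((hx 2).sin.pow 2) (pow_ne_zero 2 hs)))
  have hH :=
    ((hasFDerivAt_const (1 : ℝ) z).div (hρ2.const_mul 2) (mul_ne_zero two_ne_zero hρ)).mul hN
  refine ⟨_, hH, ?_, ?_⟩
  · simp [KerrH]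
    field_simp
    ring
  · simp
    field_simp

theorem hasFDerivAt_KerrF_three (hs : sin (z 2) ≠ 0) {D : Phase →L[ℝ] ℝ}
    (hD : HasFDerivAt (KerrH MH aH) D z) :
    ∃ E : Phase →L[ℝ] ℝ, HasFDerivAt (KerrF MH aH 3) E z ∧
      E (Pi.single 1 1) = -2 * aH ^ 2 * cos (z 2) ^ 2 * D (Pi.single 1 1) ∧
      E (Pi.single 5 1) = -2 * aH ^ 2 * cos (z 2) ^ 2 * D (Pi.single 5 1) ∧
      E (Pi.single 2 1) = 2 * cos (z 2) * (aH ^ 2 * sin (z 2) * z 4 ^ 2 - z 7 ^ 2 / sin (z 2) ^ 3)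
        + 4 * aH ^ 2 * cos (z 2) * sin (z 2) * KerrH MH aH z
        - 2 * aH ^ 2 * cos (z 2) ^ 2 * D (Pi.single 2 1) ∧
      E (Pi.single 6 1) = 2 * z 6 - 2 * aH ^ 2 * cos (z 2) ^ 2 * D (Pi.single 6 1) := by
  have hx (i : Fin 8) : HasFDerivAt (fun z : Phase => z i) (proj i : Phase →L[ℝ] ℝ) z :=
    hasFDerivAt_apply i z
  have hw := ((hx 7).div (hx 2).sin hs).add (((hx 2).sin.const_mul aH).mul (hx 4))
  have hF :=
    (((hx 6).pow 2).add (hw.pow 2)).sub ((((hx 2).cos.pow 2).const_mul (2 * aH ^ 2)).mul hD)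
  refine ⟨_, hF, by simp, by simp, ?_, by simp⟩
  simp
  field_simp
  ring

theorem PB_KerrH_KerrF_three (hr : 0 < z 1) (hθ : 0 < z 2) (hθπ : z 2 < π) :
    PB (KerrH MH aH) (KerrF MH aH 3) z = 0 := by
  have hs : sin (z 2) ≠ 0 := (sin_pos_of_pos_of_lt_pi hθ hθπ).ne'
  have hρ : z 1 ^ 2 + aH ^ 2 * cos (z 2) ^ 2 ≠ 0 := by positivity
  obtain ⟨D, hD, hD2, hD6⟩ := hasFDerivAt_KerrH MH aH hs hρ
  obtain ⟨E, hE, hE1, hE5, hE2, hE6⟩ := hasFDerivAt_KerrF_three MH aH hs hD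
  rw [PB, pderiv_KerrH_eq_zero MH aH (.inl rfl), pderiv_KerrH_eq_zero MH aH (.inr rfl),
    pderiv_KerrF_three_eq_zero MH aH (.inl rfl), pderiv_KerrF_three_eq_zero MH aH (.inr rfl)]
  simp only [pderiv, hD.fderiv, hE.fderiv, hE1, hE5, hE2, hE6, hD2, hD6]
  ring

theorem KerrF_zero : KerrF MH aH 0 = fun z => -KerrH MH aH z := rfl

theorem KerrF_one : KerrF MH aH 1 = fun z => -z 4 := rfl

theorem KerrF_two : KerrF MH aH 2 = fun z => z 7 := rfl

end Kerr

theorem KerrF_poisson_commute_general (MH aH : ℝ) :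
    (∀ z : Phase, 0 < z 1 → 0 < z 2 → z 2 < Real.pi →
      ∀ a b : Fin 4, PB (KerrF MH aH a) (KerrF MH aH b) z = 0) ∧
    (∀ z : Phase, 0 < z 1 → 0 < z 2 → z 2 < Real.pi →
      PB (KerrH MH aH) (KerrF MH aH 3) z = 0) := by
  refine ⟨fun z hr hθ hθπ a b => ?_, fun z => PB_KerrH_KerrF_three MH aH⟩
  have hHF := PB_KerrH_KerrF_three MH aH hr hθ hθπ
  fin_cases a <;> fin_cases b <;>
    simp [KerrF_zero, KerrF_one, KerrF_two, PB_self, PB_neg_left, PB_neg_right,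
      PB_time_momentum_left, PB_time_momentum_right, PB_azimuthal_momentum_left,
      PB_azimuthal_momentum_right, pderiv_neg, pderiv_coord, pderiv_KerrH_eq_zero,
      pderiv_KerrF_three_eq_zero, hHF, PB_antisymm (F := KerrF MH aH 3)]

/-- The four integrals of motion of geodesic motion in the Kerr spacetime
Poisson-commute with each other on `𝒰 = {r > 0, 0 < ϑ < π}`; in particular
the nontrivial bracket `{H, F₃}` vanishes identically. -/
theorem KerrF_poisson_commute (MH aH : ℝ) (hMH : 0 < MH) :
    (∀ z : Phase, 0 < z 1 → 0 < z 2 → z 2 < Real.pi →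
      ∀ a b : Fin 4, PB (KerrF MH aH a) (KerrF MH aH b) z = 0) ∧
    (∀ z : Phase, 0 < z 1 → 0 < z 2 → z 2 < Real.pi →
      PB (KerrH MH aH) (KerrF MH aH 3) z = 0) :=
  KerrF_poisson_commute_general MH aH

end
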